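/- arXiv:2008.02998 — 7 statements merged into one kernel-verified Lean document; each statement's English description precedes it below -/
import Mathlib

section
/- Let k be a commutative ring, q ≥ 1 an integer, Γ = Γ_q = ⟨σ, τ ∣ στσ⁻¹ = τ^q⟩, and kΓ its group algebra. Then the sequence of right kΓ-modules 0 → kΓ → kΓ ⊕ kΓ → kΓ → k → 0 is exact, where the first map sends x to ((1 − (∑_{j=0}^{q−1} τ^j)σ)·x, (τ − 1)·x), the second map sends (a, b) to (1 − τ)·a + (1 − σ)·b, and the last map is the augmentation sending every group element to 1. -/
/-
Right Fox derivatives form a cocycle `fox` on the free group on `σ, τ` with values in `kΓ ⊕ kΓ`,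
and `d₁ (fox w) = 1 - w`; as `aug` vanishes exactly on the right ideal spanned by the `1 - g`,
this gives exactness at `kΓ`. Sending each `g ∈ Γ` to the Fox derivative of a chosen word for `g`
gives a `k`-linear `h` with `z + h (d₁ z)` in the right submodule generated by the Fox derivative
of the relator, because Fox derivatives of two words for the same element of `Γ` differ by an
element of that submodule. The Fox derivative of `στσ⁻¹τ^{-q}` is `d₂ 1` times a unit of `kΓ`,
which gives exactness at `kΓ ⊕ kΓ`. Finally, `τ` has infinite order (`Γ` acts on `ℚ` by
`σ x = q x`, `τ x = x + 1`), so an element of `kΓ` fixed by `τ` would have infinite support;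
hence left multiplication by `τ - 1`, and with it `d₂`, is injective.
-/

/-- The Baumslag–Solitar relation `στσ⁻¹τ^{-q}` defining the q-tame group
`Γ_q = ⟨σ, τ ∣ στσ⁻¹ = τ^q⟩`, with `σ = of 0` and `τ = of 1`. -/
def BSrels (q : ℕ) : Set (FreeGroup (Fin 2)) :=
  {FreeGroup.of 0 * FreeGroup.of 1 * (FreeGroup.of 0)⁻¹ * (FreeGroup.of 1 ^ q)⁻¹}

open MonoidAlgebra
open scoped RightActions

theorem MonoidAlgebra.eq_zero_of_of_mul_eq_self {k G : Type*} [Ring k] [Group G] {g : G}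
    (hg : ¬IsOfFinOrder g) {z : MonoidAlgebra k G} (hz : of k G g * z = z) : z = 0 := by
  by_contra hne
  obtain ⟨h, hh⟩ : ∃ h, z.coeff h ≠ 0 := by
    by_contra! H
    exact hne (coeff_injective (Finsupp.ext H))
  have hcoeff (n : ℕ) : z.coeff (g ^ n * h) = z.coeff h := by
    induction n with
    | zero => simp
    | succ n ih =>
      calc z.coeff (g ^ (n + 1) * h) = (of k G g * z).coeff (g * (g ^ n * h)) := by
            rw [hz, pow_succ', mul_assoc]
        _ = z.coeff h := by rw [of_apply, coeff_single_mul_apply, inv_mul_cancel_left, one_mul, ih]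
  refine Set.not_infinite.2 z.coeff.support.finite_toSet <|
    Set.infinite_of_injective_forall_mem (f := fun n : ℕ => g ^ n * h) ?_ fun n => ?_
  · exact fun m n hmn => injective_pow_iff_not_isOfFinOrder.2 hg (mul_right_cancel hmn)
  · simpa [hcoeff] using hh

theorem MonoidAlgebra.isLeftRegular_of_sub_one {k G : Type*} [Ring k] [Group G] {g : G}
    (hg : ¬IsOfFinOrder g) : IsLeftRegular (of k G g - 1) := by
  intro x y hxy
  refine sub_eq_zero.1 (eq_zero_of_of_mul_eq_self hg ?_)
  rw [mul_sub]
  simpa [sub_mul, sub_eq_sub_iff_sub_eq_sub] using hxy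

@[simp]
lemma PresentedGroup.mk_of {α : Type*} {rels : Set (FreeGroup α)} (x : α) :
    PresentedGroup.mk rels (FreeGroup.of x) = PresentedGroup.of x :=
  rfl

noncomputable section

namespace Fox

variable {k G ι : Type*} [CommRing k] [Group G]

-- The split extension `(ι →₀ kG) ⋊ G` for the right action of `G`; cocycles on a free group are
-- read off from homomorphisms into it.
variable (k G ι) in
@[ext]
structure SplitExt where
  vec : ι →₀ MonoidAlgebra k G
  elt : G

namespace SplitExt

instance : Mul (SplitExt k G ι) := ⟨fun p p' => ⟨p.vec <• of k G p'.elt + p'.vec, p.elt * p'.elt⟩⟩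
instance : One (SplitExt k G ι) := ⟨⟨0, 1⟩⟩
instance : Inv (SplitExt k G ι) := ⟨fun p => ⟨-(p.vec <• of k G p.elt⁻¹), p.elt⁻¹⟩⟩

@[simp] lemma mul_vec (p p' : SplitExt k G ι) : (p * p').vec = p.vec <• of k G p'.elt + p'.vec :=
  rfl
@[simp] lemma mul_elt (p p' : SplitExt k G ι) : (p * p').elt = p.elt * p'.elt := rfl
@[simp] lemma one_vec : (1 : SplitExt k G ι).vec = 0 := rfl
@[simp] lemma one_elt : (1 : SplitExt k G ι).elt = 1 := rfl
@[simp] lemma inv_vec (p : SplitExt k G ι) : p⁻¹.vec = -(p.vec <• of k G p.elt⁻¹) := rfl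
@[simp] lemma inv_elt (p : SplitExt k G ι) : p⁻¹.elt = p.elt⁻¹ := rfl

instance : Group (SplitExt k G ι) :=
  Group.ofLeftAxioms
    (fun p p' p'' => by ext1 <;> simp [smul_add, op_smul_op_smul, mul_assoc, add_assoc])
    (fun p => by ext1 <;> simp)
    (fun p => by ext1 <;> simp [op_smul_op_smul, ← one_def])

def eltHom : SplitExt k G ι →* G where
  toFun := elt
  map_one' := rfl
  map_mul' _ _ := rfl

end SplitExt

variable (k) in
def foxHom (π : FreeGroup ι →* G) : FreeGroup ι →* SplitExt k G ι :=
  FreeGroup.lift fun i => ⟨Finsupp.single i 1, π (FreeGroup.of i)⟩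

variable (k) in
def fox (π : FreeGroup ι →* G) (w : FreeGroup ι) : ι →₀ MonoidAlgebra k G := (foxHom k π w).vec

variable (π : FreeGroup ι →* G)

lemma foxHom_elt (w : FreeGroup ι) : (foxHom k π w).elt = π w := by
  change (SplitExt.eltHom.comp (foxHom k π)) w = π w
  congr 1
  ext i
  simp [foxHom, SplitExt.eltHom]

@[simp] lemma fox_of (i : ι) : fox k π (FreeGroup.of i) = Finsupp.single i 1 := by
  simp [fox, foxHom]

@[simp] lemma fox_one : fox k π 1 = 0 := by
  simp [fox]

lemma fox_mul (u v : FreeGroup ι) : fox k π (u * v) = fox k π u <• of k G (π v) + fox k π v := by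
  simp [fox, foxHom_elt]

lemma fox_inv (u : FreeGroup ι) : fox k π u⁻¹ = -(fox k π u <• of k G (π u)⁻¹) := by
  simp [fox, foxHom_elt]

lemma fox_mul_inv (u v : FreeGroup ι) :
    fox k π (u * v⁻¹) = (fox k π u - fox k π v) <• of k G (π v)⁻¹ := by
  rw [fox_mul, fox_inv, map_inv, smul_sub, sub_eq_add_neg]

variable (k) in
def boundary : (ι →₀ MonoidAlgebra k G) →ₗ[(MonoidAlgebra k G)ᵐᵒᵖ] MonoidAlgebra k G :=
  Finsupp.lsum ℕ fun i => DistribSMul.toLinearMap _ _ (1 - of k G (π (FreeGroup.of i)))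

@[simp] lemma boundary_single (i : ι) (a : MonoidAlgebra k G) :
    boundary k π (Finsupp.single i a) = (1 - of k G (π (FreeGroup.of i))) * a := by
  simp [boundary]

lemma boundary_fox (w : FreeGroup ι) : boundary k π (fox k π w) = 1 - of k G (π w) := by
  induction w using FreeGroup.induction_on with
  | C1 => simp [← one_def]
  | of i => simp
  | inv_of i _ => simp [fox_inv, sub_mul, ← one_def]
  | mul u v hu hv => simp [fox_mul, hu, hv, sub_mul]

variable (k) in
def relationModule (rels : Set (FreeGroup ι)) :
    Submodule (MonoidAlgebra k G)ᵐᵒᵖ (ι →₀ MonoidAlgebra k G) :=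
  Submodule.span _ (fox k π '' rels)

lemma fox_mem_relationModule {rels : Set (FreeGroup ι)} (hrels : ∀ r ∈ rels, π r = 1)
    {w : FreeGroup ι} (hw : w ∈ Subgroup.normalClosure rels) :
    fox k π w ∈ relationModule k π rels := by
  induction hw using Subgroup.closure_induction with
  | mem w hw =>
    obtain ⟨r, hr, c, rfl⟩ : ∃ r ∈ rels, ∃ c, c * r * c⁻¹ = w := by
      simpa only [isConj_iff] using Group.mem_conjugatesOfSet_iff.1 hw
    rw [fox_mul_inv, fox_mul, hrels r hr, map_one, MulOpposite.op_one, one_smul,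
      add_sub_cancel_left]
    exact Submodule.smul_mem _ _ (Submodule.subset_span ⟨r, hr, rfl⟩)
  | one => simp
  | mul u v _ _ hu hv =>
    rw [fox_mul]
    exact add_mem (Submodule.smul_mem _ _ hu) hv
  | inv u _ hu =>
    rw [fox_inv]
    exact neg_mem (Submodule.smul_mem _ _ hu)

lemma augmentation_boundary (z : ι →₀ MonoidAlgebra k G) : lift k k G 1 (boundary k π z) = 0 := by
  induction z using Finsupp.induction_linear with
  | zero => simp
  | add z z' hz hz' => rw [map_add, map_add, hz, hz', add_zero]
  | single i a => simp

lemma mem_of_augmentation_eq_zero {I : Submodule (MonoidAlgebra k G)ᵐᵒᵖ (MonoidAlgebra k G)}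
    (hI : ∀ g, 1 - of k G g ∈ I) {a : MonoidAlgebra k G} (ha : lift k k G 1 a = 0) : a ∈ I := by
  suffices ∀ a, a - algebraMap k _ (lift k k G 1 a) ∈ I by simpa [ha] using this a
  intro a
  induction a using MonoidAlgebra.induction_on with
  | of g => simpa [← one_def] using neg_mem (hI g)
  | add a b ha hb => simpa [add_sub_add_comm] using add_mem ha hb
  | smul r a ha =>
    simpa [smul_sub, Algebra.smul_def, mul_sub, single_mul_single] using
      Submodule.smul_of_tower_mem _ r ha

theorem mem_range_boundary_iff (hπ : Function.Surjective π) {a : MonoidAlgebra k G} :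
    a ∈ LinearMap.range (boundary k π) ↔ lift k k G 1 a = 0 := by
  refine ⟨?_, mem_of_augmentation_eq_zero fun g => ?_⟩
  · rintro ⟨z, rfl⟩
    exact augmentation_boundary π z
  · obtain ⟨w, rfl⟩ := hπ g
    exact ⟨fox k π w, boundary_fox π w⟩

section Presentation

variable (rels : Set (FreeGroup ι))

lemma fox_sub_fox_mem_relationModule {u v : FreeGroup ι}
    (h : PresentedGroup.mk rels u = PresentedGroup.mk rels v) :
    fox k (PresentedGroup.mk rels) u - fox k (PresentedGroup.mk rels) v ∈
      relationModule k (PresentedGroup.mk rels) rels := by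
  have hw : PresentedGroup.mk rels (u⁻¹ * v) = 1 := by simp [h]
  have hv : v = u * (u⁻¹ * v) := by group
  rw [hv, fox_mul, hw, map_one, MulOpposite.op_one, one_smul, sub_add_cancel_left]
  exact neg_mem <| fox_mem_relationModule _ (fun _ => PresentedGroup.one_of_mem)
    (PresentedGroup.mk_eq_one_iff.1 hw)

variable (k) in
def contraction :
    MonoidAlgebra k (PresentedGroup rels) →ₗ[k] (ι →₀ MonoidAlgebra k (PresentedGroup rels)) :=
  (MonoidAlgebra.basis _ k).constr k fun g =>
    fox k (PresentedGroup.mk rels) (Function.surjInv (PresentedGroup.mk_surjective rels) g)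

lemma single_add_contraction_mem (i : ι) (a : MonoidAlgebra k (PresentedGroup rels)) :
    Finsupp.single i a +
        contraction k rels ((1 - of k _ (PresentedGroup.mk rels (FreeGroup.of i))) * a) ∈
      relationModule k (PresentedGroup.mk rels) rels := by
  induction a using MonoidAlgebra.induction_on with
  | of g =>
    set sec := Function.surjInv (PresentedGroup.mk_surjective rels)
    have hsec (g) : PresentedGroup.mk rels (sec g) = g := Function.surjInv_eq _ g
    have hcontr (g) : contraction k rels (of k _ g) = fox k (PresentedGroup.mk rels) (sec g) := by
      simpa [contraction, sec] using (MonoidAlgebra.basis _ k).constr_basis k _ g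
    have hfox : Finsupp.single i (of k _ g) + fox k (PresentedGroup.mk rels) (sec g) =
        fox k (PresentedGroup.mk rels) (FreeGroup.of i * sec g) := by
      simp [fox_mul, hsec]
    rw [sub_mul, one_mul, ← map_mul, map_sub, hcontr, hcontr, ← add_sub_assoc, hfox]
    exact fox_sub_fox_mem_relationModule rels (by simp [hsec])
  | add a b ha hb => simpa [mul_add, add_add_add_comm] using add_mem ha hb
  | smul r a ha => simpa [smul_add] using Submodule.smul_of_tower_mem _ r ha

lemma add_contraction_boundary_mem (z : ι →₀ MonoidAlgebra k (PresentedGroup rels)) :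
    z + contraction k rels (boundary k (PresentedGroup.mk rels) z) ∈
      relationModule k (PresentedGroup.mk rels) rels := by
  induction z using Finsupp.induction_linear with
  | zero => simp
  | add z z' hz hz' => simpa [add_add_add_comm] using add_mem hz hz'
  | single i a => simpa using single_add_contraction_mem rels i a

theorem ker_boundary :
    LinearMap.ker (boundary k (PresentedGroup.mk rels)) =
      relationModule k (PresentedGroup.mk rels) rels := by
  refine le_antisymm (fun z hz => ?_) (Submodule.span_le.2 ?_)
  · simpa [LinearMap.mem_ker.1 hz] using add_contraction_boundary_mem rels z
  · rintro _ ⟨r, hr, rfl⟩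
    simp [boundary_fox, PresentedGroup.one_of_mem hr, ← one_def]

end Presentation

end Fox

end

namespace BaumslagSolitar

variable {q : ℕ}

def affineAction (hq : q ≠ 0) : PresentedGroup (BSrels q) →* Equiv.Perm ℚ :=
  PresentedGroup.toGroup (f := ![Equiv.mulLeft₀ (q : ℚ) (Nat.cast_ne_zero.2 hq), Equiv.addLeft 1])
    (by
      rintro _ rfl
      ext x
      simp [Equiv.Perm.mul_apply, mul_add, hq])

theorem not_isOfFinOrder_of_one (hq : q ≠ 0) :
    ¬IsOfFinOrder (PresentedGroup.of 1 : PresentedGroup (BSrels q)) := by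
  refine not_isOfFinOrder_of_injective_pow fun m n hmn => ?_
  simpa [affineAction] using congrArg (fun g => affineAction hq g 0) hmn

open Fox

variable (k : Type*) [CommRing k]

local notation "Γ" => PresentedGroup (BSrels q)
local notation "σ" => of k Γ (PresentedGroup.of 0)
local notation "τ" => of k Γ (PresentedGroup.of 1)

lemma fox_of_one_pow (n : ℕ) :
    fox k (PresentedGroup.mk (BSrels q)) (FreeGroup.of 1 ^ n) =
      Finsupp.single 1 (∑ j ∈ Finset.range n, τ ^ j) := by
  induction n with
  | zero => simp
  | succ n ih =>
    simp [pow_succ', fox_mul, ih, Finset.sum_range_succ, add_comm, Finsupp.smul_single]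

lemma fox_relator :
    fox k (PresentedGroup.mk (BSrels q))
        (FreeGroup.of 0 * FreeGroup.of 1 * (FreeGroup.of 0)⁻¹ * (FreeGroup.of 1 ^ q)⁻¹) =
      (Finsupp.single 1 (1 - (∑ j ∈ Finset.range q, τ ^ j) * σ) + Finsupp.single 0 (τ - 1)) <•
        of k Γ ((PresentedGroup.of 0)⁻¹ * (PresentedGroup.of 1 ^ q)⁻¹) := by
  rw [fox_mul_inv, fox_mul_inv, fox_mul, fox_of_one_pow]
  have hσ (x : MonoidAlgebra k Γ) : σ * (of k Γ (PresentedGroup.of 0)⁻¹ * x) = x := by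
    rw [← mul_assoc, ← map_mul, mul_inv_cancel, map_one, one_mul]
  refine Finsupp.ext fun j => ?_
  fin_cases j <;> simp [-of_apply, map_mul, mul_assoc, sub_mul, hσ]

-- The first coordinate is the `τ`-coordinate (index `1`): `d₁ (a, b) = (1 - τ) a + (1 - σ) b`.
noncomputable def ofPair {M : Type*} [AddCommMonoid M] : M × M ≃ (Fin 2 →₀ M) where
  toFun p := Finsupp.single 1 p.1 + Finsupp.single 0 p.2
  invFun z := (z 1, z 0)
  left_inv p := by simp
  right_inv z := Finsupp.ext fun j => by fin_cases j <;> simp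

lemma ofPair_mul {R : Type*} [Semiring R] (a b x : R) :
    ofPair (a * x, b * x) = ofPair (a, b) <• x := by
  simp [ofPair, Finsupp.smul_single]

lemma boundary_ofPair (p : MonoidAlgebra k Γ × MonoidAlgebra k Γ) :
    boundary k (PresentedGroup.mk (BSrels q)) (ofPair p) = (1 - τ) * p.1 + (1 - σ) * p.2 := by
  simp [ofPair, add_comm]

theorem boundary_eq_zero_iff (z : Fin 2 →₀ MonoidAlgebra k Γ) :
    boundary k (PresentedGroup.mk (BSrels q)) z = 0 ↔
      ∃ x, ofPair ((1 - (∑ j ∈ Finset.range q, τ ^ j) * σ) * x, (τ - 1) * x) = z := by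
  have hrels : relationModule k (PresentedGroup.mk (BSrels q)) (BSrels q) =
      (MonoidAlgebra k Γ)ᵐᵒᵖ ∙ fox k (PresentedGroup.mk (BSrels q))
        (FreeGroup.of 0 * FreeGroup.of 1 * (FreeGroup.of 0)⁻¹ * (FreeGroup.of 1 ^ q)⁻¹) :=
    congrArg (Submodule.span _) Set.image_singleton
  rw [← LinearMap.mem_ker, ker_boundary, hrels, fox_relator,
    Submodule.span_singleton_smul_eq ((Group.isUnit _).map (of k Γ)).op,
    Submodule.mem_span_singleton]
  constructor
  · rintro ⟨a, rfl⟩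
    exact ⟨a.unop, ofPair_mul _ _ _⟩
  · rintro ⟨x, rfl⟩
    exact ⟨MulOpposite.op x, (ofPair_mul _ _ _).symm⟩

end BaumslagSolitar

open BaumslagSolitar in
/-- The sequence of right `kΓ_q`-modules `0 → kΓ → kΓ ⊕ kΓ → kΓ → k → 0` is exact, where the
first map is `x ↦ ((1 − (∑_{j<q} τ^j)σ)·x, (τ − 1)·x)`, the second is
`(a, b) ↦ (1 − τ)·a + (1 − σ)·b`, and the last is the augmentation sending every group
element to `1`.  Exactness is expressed as: the first map is injective, the range of each map
is the kernel of the next, and the augmentation is surjective. -/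
theorem stmt3 (k : Type*) [CommRing k] (q : ℕ) (hq : 1 ≤ q) :
    let G := PresentedGroup (BSrels q)
    let A := MonoidAlgebra k G
    let σ : A := MonoidAlgebra.of k G (PresentedGroup.of 0)
    let τ : A := MonoidAlgebra.of k G (PresentedGroup.of 1)
    let aug : A →ₐ[k] k := MonoidAlgebra.lift k k G 1
    let d2 : A → A × A := fun x => ((1 - (∑ j ∈ Finset.range q, τ ^ j) * σ) * x, (τ - 1) * x)
    let d1 : A × A → A := fun p => (1 - τ) * p.1 + (1 - σ) * p.2
    Function.Injective d2 ∧
      Set.range d2 = {p : A × A | d1 p = 0} ∧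
      Set.range d1 = {x : A | aug x = 0} ∧
      Function.Surjective (aug : A → k) := by
  intro G A σ τ aug d2 d1
  have hd1 : d1 = Fox.boundary k (PresentedGroup.mk (BSrels q)) ∘ ofPair :=
    funext fun p => (boundary_ofPair k p).symm
  have hτ : IsLeftRegular (τ - 1) :=
    isLeftRegular_of_sub_one (not_isOfFinOrder_of_one (Nat.one_le_iff_ne_zero.1 hq))
  refine ⟨fun x y h => hτ (congrArg Prod.snd h), ?_, ?_, fun c => ⟨algebraMap k A c, by simp [aug]⟩⟩
  · ext p
    rw [Set.mem_ofPred_eq, hd1, Function.comp_apply, boundary_eq_zero_iff]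
    exact exists_congr fun x => ofPair.apply_eq_iff_eq.symm
  · ext x
    rw [hd1, Set.range_comp, ofPair.range_eq_univ, Set.image_univ]
    exact Fox.mem_range_boundary_iff _ (PresentedGroup.mk_surjective _)
end

section
/- Let K be a field, n ≥ 1, and c ∈ K such that c^i ≠ 1 for all 1 ≤ i ≤ n. If A is an n×n matrix over K whose characteristic polynomial equals the characteristic polynomial of c·A, then the characteristic polynomial of A is t^n; in particular A^n = 0. -/
/-!
Substituting `t ↦ c t` in `det (t I - c A)` gives `c ^ n · charpoly A (t)`, so comparing
coefficients of `charpoly A = charpoly (c A)` yields `a_k c^k = c^n a_k`, i.e. `a_k = 0` whenever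
`c ≠ 0` and `c^(n-k) ≠ 1` (for `c = 0` simply `c A = 0`). Hence all lower coefficients of the
monic polynomial `charpoly A` vanish, and Cayley–Hamilton gives `A ^ n = 0`.
-/

open Polynomial

namespace Matrix

variable {R ι : Type*} [CommRing R] [Fintype ι] [DecidableEq ι]

theorem charmatrix_smul_map_aeval_C_mul_X (M : Matrix ι ι R) (c : R) :
    (charmatrix (c • M)).map (aeval (C c * X)) = C c • charmatrix M := by
  ext i j
  rcases eq_or_ne i j with rfl | hij
  · simp [charmatrix_apply_eq, mul_sub, C_mul]
  · simp [charmatrix_apply_ne _ _ _ hij, C_mul]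

theorem charpoly_smul_comp_C_mul_X (M : Matrix ι ι R) (c : R) :
    (c • M).charpoly.comp (C c * X) = C c ^ Fintype.card ι * M.charpoly := by
  have := congrArg det (charmatrix_smul_map_aeval_C_mul_X M c)
  rwa [det_smul, ← AlgHom.mapMatrix_apply, ← AlgHom.map_det, ← comp_eq_aeval] at this

theorem pow_card_eq_zero_of_charpoly_eq_X_pow {M : Matrix ι ι R}
    (hM : M.charpoly = X ^ Fintype.card ι) : M ^ Fintype.card ι = 0 := by
  simpa [hM] using M.aeval_self_charpoly

end Matrix

namespace Polynomial

variable {R : Type*} [CommRing R]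

theorem coeff_eq_zero_of_comp_C_mul_X_eq [IsDomain R] {p : R[X]} {c : R} {m k : ℕ}
    (hp : p.comp (C c * X) = C c ^ m * p) (hk : c ^ k ≠ c ^ m) : p.coeff k = 0 := by
  have hcoeff := congrArg (coeff · k) hp
  simp only [comp_C_mul_X_coeff, ← C_pow, coeff_C_mul, mul_comm (c ^ m)] at hcoeff
  exact (mul_eq_mul_left_iff.mp hcoeff).resolve_left hk

theorem Monic.eq_X_pow_of_coeff_eq_zero {p : R[X]} {n : ℕ} (hp : p.Monic) (hdeg : p.natDegree = n)
    (hcoeff : ∀ k < n, p.coeff k = 0) : p = X ^ n := by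
  nontriviality R
  subst hdeg
  exact hp.eq_X_pow_iff_natDegree_le_natTrailingDegree.mpr
    (le_natTrailingDegree hp.ne_zero hcoeff)

end Polynomial

theorem stmt4_general {K : Type*} [Field K] (n : ℕ) (c : K)
    (hc : ∀ i : ℕ, 1 ≤ i → i ≤ n → c ^ i ≠ 1)
    (A : Matrix (Fin n) (Fin n) K)
    (h : A.charpoly = (c • A).charpoly) :
    A.charpoly = Polynomial.X ^ n ∧ A ^ n = 0 := by
  have hcharpoly : A.charpoly = X ^ n := by
    rcases eq_or_ne c 0 with rfl | hc0
    · rw [h, zero_smul, Matrix.charpoly_zero, Fintype.card_fin]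
    have hscale := A.charpoly_smul_comp_C_mul_X c
    rw [← h, Fintype.card_fin] at hscale
    have hdeg : A.charpoly.natDegree = n := by simp [A.charpoly_natDegree_eq_dim]
    refine A.charpoly_monic.eq_X_pow_of_coeff_eq_zero hdeg fun k hk => ?_
    refine coeff_eq_zero_of_comp_C_mul_X_eq hscale fun hck => ?_
    refine hc (n - k) (by omega) (by omega) (mul_left_cancel₀ (pow_ne_zero k hc0) ?_)
    rw [← pow_add, Nat.add_sub_cancel' hk.le, mul_one, hck]
  refine ⟨hcharpoly, ?_⟩
  simpa using Matrix.pow_card_eq_zero_of_charpoly_eq_X_pow (M := A) (by simpa using hcharpoly)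

/-- Let `K` be a field, `n ≥ 1`, and `c ∈ K` with `c^i ≠ 1` for all `1 ≤ i ≤ n`.  If `A` is an
`n×n` matrix over `K` whose characteristic polynomial equals that of `c·A`, then the
characteristic polynomial of `A` is `t^n`; in particular `A^n = 0`. -/
theorem stmt4 {K : Type*} [Field K] (n : ℕ) (hn : 1 ≤ n) (c : K)
    (hc : ∀ i : ℕ, 1 ≤ i → i ≤ n → c ^ i ≠ 1)
    (A : Matrix (Fin n) (Fin n) K)
    (h : A.charpoly = (c • A).charpoly) :
    A.charpoly = Polynomial.X ^ n ∧ A ^ n = 0 :=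
  stmt4_general n c hc A h
end

section
/- Let A be a commutative ring and I ⊆ A an ideal with I^k = 0 for some k ≥ 1. Then the kernel of the reduction homomorphism GL_n(A) → GL_n(A/I), i.e. the group of invertible n×n matrices congruent to the identity modulo I, is a nilpotent group of nilpotency class at most k − 1. -/
/-!
Write `Γ(J)` for `J.congruenceSubgroup n`, the units of `Matrix n n A` congruent to `1` modulo `J`.
For units `g`, `h` one has `⁅g, h⁆ - 1 = ((g - 1)(h - 1) - (h - 1)(g - 1)) g⁻¹ h⁻¹`, so
`⁅Γ(I), Γ(J)⁆ ≤ Γ(I * J)`. By induction the `m`-th term of the lower central series of `Γ(I)` lies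
in `Γ(I ^ (m + 1))`, and `Γ(I ^ k) = Γ(⊥)` is trivial.
-/

open scoped commutatorElement

theorem Units.val_commutatorElement_sub_one {R : Type*} [Ring R] (u v : Rˣ) :
    ((⁅u, v⁆ : Rˣ) : R) - 1 = ((u - 1) * (v - 1) - (v - 1) * (u - 1)) * (↑u⁻¹ * ↑v⁻¹ : R) := by
  have key : (u * v - v * u : R) * (↑u⁻¹ * ↑v⁻¹) = u * v * ↑u⁻¹ * ↑v⁻¹ - 1 := by
    rw [sub_mul, mul_assoc (v : R), ← mul_assoc (u : R), Units.mul_inv, one_mul, Units.mul_inv]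
    simp only [mul_assoc]
  rw [commutatorElement_def, Units.val_mul, Units.val_mul, Units.val_mul, ← key]
  noncomm_ring

namespace Ideal

variable {A : Type*} [CommRing A] {n : Type*} [Fintype n] [DecidableEq n]

theorem mul_mem_matrix_mul {I J : Ideal A} {M N : Matrix n n A}
    (hM : M ∈ I.matrix n) (hN : N ∈ J.matrix n) : M * N ∈ (I * J).matrix n :=
  fun i j => sum_mem _ fun l _ => mul_mem_mul (hM i l) (hN l j)

variable (n) in
def congruenceSubgroup (I : Ideal A) : Subgroup (Matrix n n A)ˣ :=
  (Units.map (Quotient.mk I).mapMatrix.toMonoidHom).ker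

theorem mem_congruenceSubgroup_iff {I : Ideal A} {g : (Matrix n n A)ˣ} :
    g ∈ I.congruenceSubgroup n ↔ (g : Matrix n n A) - 1 ∈ I.matrix n := by
  rw [congruenceSubgroup, MonoidHom.mem_ker, Units.ext_iff, Units.coe_map, Units.val_one,
    ← map_one (Quotient.mk I).mapMatrix, mem_matrix]
  simp only [MonoidHom.coe_coe, RingHom.toMonoidHom_eq_coe, ← Matrix.ext_iff,
    RingHom.mapMatrix_apply, Matrix.map_apply, Quotient.eq, Matrix.sub_apply]

theorem congruenceSubgroup_bot : (⊥ : Ideal A).congruenceSubgroup n = ⊥ := by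
  ext g
  rw [mem_congruenceSubgroup_iff, matrix_bot, mem_bot, sub_eq_zero, Subgroup.mem_bot,
    Units.ext_iff, Units.val_one]

theorem commutator_congruenceSubgroup_le (I J : Ideal A) :
    ⁅I.congruenceSubgroup n, J.congruenceSubgroup n⁆ ≤ (I * J).congruenceSubgroup n := by
  rw [Subgroup.commutator_le]
  intro g hg h hh
  rw [mem_congruenceSubgroup_iff] at hg hh ⊢
  rw [Units.val_commutatorElement_sub_one, ← mul_top (I * J)]
  refine mul_mem_matrix_mul (sub_mem (mul_mem_matrix_mul hg hh) ?_) (by simp)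
  rw [mul_comm I J]
  exact mul_mem_matrix_mul hh hg

theorem lowerCentralSeries_congruenceSubgroup_le (I : Ideal A) (m : ℕ) :
    (I.congruenceSubgroup n).lowerCentralSeries m ≤ (I ^ (m + 1)).congruenceSubgroup n := by
  induction m with
  | zero => simp
  | succ m ih =>
    rw [Subgroup.lowerCentralSeries_succ, pow_succ]
    exact (Subgroup.commutator_mono ih le_rfl).trans (commutator_congruenceSubgroup_le _ _)

end Ideal

/-- Let `A` be a commutative ring and `I ⊆ A` an ideal with `I^k = 0` for some `k ≥ 1`.  Then
the kernel of the reduction homomorphism `GL_n(A) → GL_n(A/I)` is a nilpotent group of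
nilpotency class at most `k − 1`, i.e. its `(k−1)`-st lower central series term is trivial. -/
theorem stmt6 {A : Type*} [CommRing A] (n : ℕ) (I : Ideal A) (k : ℕ) (hk : 1 ≤ k)
    (hI : I ^ k = ⊥) :
    let red : (Matrix (Fin n) (Fin n) A)ˣ →* (Matrix (Fin n) (Fin n) (A ⧸ I))ˣ :=
      Units.map ((Ideal.Quotient.mk I).mapMatrix.toMonoidHom)
    Subgroup.lowerCentralSeries (⊤ : Subgroup ↥(MonoidHom.ker red)) (k - 1) = ⊥ := by
  intro red
  change (⊤ : Subgroup (I.congruenceSubgroup (Fin n))).lowerCentralSeries (k - 1) = ⊥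
  have h := I.lowerCentralSeries_congruenceSubgroup_le (n := Fin n) (k - 1)
  rw [Nat.sub_add_cancel hk, hI, Ideal.congruenceSubgroup_bot, le_bot_iff,
    ← Subgroup.top_subtype_lowerCentralSeries] at h
  rwa [← Subgroup.map_subtype_inj, Subgroup.map_bot]
end

section
/- Let Γ be a group, A a commutative ring, and ρ : Γ → GL_n(A) a group homomorphism. Let A[ε] = A[X]/(X²) be the ring of dual numbers over A. Then the set of group homomorphisms ρ̃ : Γ → GL_n(A[ε]) whose reduction modulo ε equals ρ is in natural bijection with the set of 1-cocycles, i.e. functions c : Γ → M_n(A) satisfying c(γδ) = c(γ) + ρ(γ)·c(δ)·ρ(γ)⁻¹ for all γ, δ ∈ Γ; the bijection sends c to the homomorphism γ ↦ (1 + ε·c(γ))·ρ(γ). -/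
/-!
Write `p : GL_n(A[ε]) → GL_n(A)` for reduction mod `ε` and `s : GL_n(A) → GL_n(A[ε])` for the
inclusion, a section of `p`. For any split epimorphism of groups, the lifts of `ρ` along `p` are
exactly the maps `γ ↦ c γ * s (ρ γ)` with `c : Γ → ker p` a crossed homomorphism for the
conjugation action through `s ∘ ρ`. Here `x ↦ 1 + ε x` identifies `(M_n(A), +)` with `ker p`
(because `ε² = 0`) and intertwines conjugation by `ρ γ`, which turns that crossed-homomorphism
condition into the additive cocycle condition.
-/

open TrivSqZeroExt DualNumber

section SplitLifts

variable {Γ G H : Type*} [Group Γ] [Group G] [Group H]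

def crossedHomsEquivLifts (p : G →* H) (s : H →* G) (hs : p.comp s = .id H) (ρ : Γ →* H) :
    {c : Γ → p.ker //
      ∀ γ δ, (c (γ * δ) : G) = c γ * (s (ρ γ) * c δ * (s (ρ γ))⁻¹)} ≃
        {ρ' : Γ →* G // p.comp ρ' = ρ} where
  toFun c := ⟨.mk' (fun γ => c.1 γ * s (ρ γ)) fun γ δ => by simp [c.2, mul_assoc], by
    ext γ
    simp [(MonoidHom.mem_ker).1 (c.1 γ).2, ← MonoidHom.comp_apply p s, hs]⟩
  invFun ρ' := ⟨fun γ => ⟨ρ'.1 γ * (s (ρ γ))⁻¹, by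
      rw [MonoidHom.mem_ker, map_mul, map_inv, ← MonoidHom.comp_apply p s, hs,
        ← MonoidHom.comp_apply p ρ'.1, ρ'.2, MonoidHom.id_apply, mul_inv_cancel]⟩,
    fun γ δ => by simp [mul_assoc]⟩
  left_inv c := by ext; simp
  right_inv ρ' := by ext; simp

end SplitLifts

section DualNumberMatrix

variable {A m : Type*} [CommRing A] [Fintype m]

local notation "Mat" => Matrix m m A
local notation "MatD" => Matrix m m A[ε]

theorem eps_smul_mul_eps_smul (X Y : MatD) : ((ε : A[ε]) • X) * ((ε : A[ε]) • Y) = 0 := by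
  rw [smul_mul_smul_comm, eps_mul_eps, zero_smul]

variable [DecidableEq m] {Γ : Type*} [Monoid Γ]

abbrev inlMatrixHom : Mat →+* MatD := (inlHom A A).mapMatrix

abbrev fstMatrixHom : MatD →+* Mat := (fstHom A A A : A[ε] →+* A).mapMatrix

abbrev inlUnitsHom : Matˣ →* MatDˣ := Units.map inlMatrixHom.toMonoidHom

abbrev fstUnitsHom : MatDˣ →* Matˣ := Units.map fstMatrixHom.toMonoidHom

theorem fstUnitsHom_comp_inlUnitsHom :
    (fstUnitsHom.comp inlUnitsHom : Matˣ →* _) = .id _ := by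
  ext u i j
  simp

theorem fstUnitsHom_comp_eq_iff (ρ' : Γ →* MatDˣ) (ρ : Γ →* Matˣ) :
    fstUnitsHom.comp ρ' = ρ ↔ ∀ γ i j, fst ((ρ' γ : MatD) i j) = (ρ γ : Mat) i j := by
  simp only [MonoidHom.ext_iff, Units.ext_iff, ← Matrix.ext_iff]
  rfl

theorem eps_smul_inlMatrixHom (x : Mat) : (ε : A[ε]) • inlMatrixHom x = x.map inr := by
  ext i j <;> simp

theorem eq_inlMatrixHom_add_eps_smul (X : MatD) :
    X = inlMatrixHom (fstMatrixHom X) + (ε : A[ε]) • inlMatrixHom (X.map snd) := by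
  ext i j <;> simp

theorem fstMatrixHom_one_add_eps_smul (x : Mat) :
    fstMatrixHom (1 + (ε : A[ε]) • inlMatrixHom x) = 1 := by
  ext i j
  by_cases h : i = j <;> simp [Matrix.one_apply, h]

theorem map_snd_one_add_eps_smul (x : Mat) :
    (1 + (ε : A[ε]) • inlMatrixHom x).map snd = x := by
  ext i j
  simp [Matrix.one_apply, apply_ite]

theorem one_add_eps_smul_mul (x y : Mat) :
    (1 + (ε : A[ε]) • inlMatrixHom x) * (1 + (ε : A[ε]) • inlMatrixHom y) =
      1 + (ε : A[ε]) • inlMatrixHom (x + y) := by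
  rw [mul_add, add_mul, add_mul, eps_smul_mul_eps_smul, map_add, smul_add, one_mul, mul_one,
    one_mul, add_zero, add_assoc]

def oneAddEpsUnit (x : Mat) : MatDˣ where
  val := 1 + (ε : A[ε]) • inlMatrixHom x
  inv := 1 + (ε : A[ε]) • inlMatrixHom (-x)
  val_inv := by rw [one_add_eps_smul_mul, add_neg_cancel, map_zero, smul_zero, add_zero]
  inv_val := by rw [one_add_eps_smul_mul, neg_add_cancel, map_zero, smul_zero, add_zero]

def oneAddEpsKerEquiv : Multiplicative Mat ≃* (fstUnitsHom : MatDˣ →* Matˣ).ker where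
  toFun x := ⟨oneAddEpsUnit x.toAdd, Units.ext (fstMatrixHom_one_add_eps_smul _)⟩
  invFun g := .ofAdd (((g : MatDˣ) : MatD).map snd)
  left_inv := map_snd_one_add_eps_smul
  right_inv g := by
    have hg : fstMatrixHom ((g : MatDˣ) : MatD) = 1 :=
      congr_arg Units.val ((MonoidHom.mem_ker).1 g.2)
    ext1; ext1
    conv_rhs => rw [eq_inlMatrixHom_add_eps_smul ((g : MatDˣ) : MatD), hg, map_one]
    rfl
  map_mul' x y := by ext1; ext1; exact (one_add_eps_smul_mul _ _).symm

theorem oneAddEpsKerEquiv_val (x : Mat) :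
    ((oneAddEpsKerEquiv (.ofAdd x) : MatDˣ) : MatD) = 1 + (ε : A[ε]) • inlMatrixHom x :=
  rfl

theorem inlUnitsHom_conj_oneAddEpsKerEquiv (u : Matˣ) (x : Mat) :
    inlUnitsHom u * oneAddEpsKerEquiv (.ofAdd x) * (inlUnitsHom u)⁻¹ =
      (oneAddEpsKerEquiv (.ofAdd ((u : Mat) * x * ((u⁻¹ : Matˣ) : Mat))) : MatDˣ) := by
  ext1
  rw [Units.val_mul, Units.val_mul, oneAddEpsKerEquiv_val, oneAddEpsKerEquiv_val, ← map_inv,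
    Units.coe_map, Units.coe_map]
  simp only [RingHom.toMonoidHom_eq_coe, MonoidHom.coe_coe, mul_add, add_mul, mul_one,
    mul_smul_comm, smul_mul_assoc, ← map_mul, Units.mul_inv, map_one]

theorem oneAddEpsKerEquiv_cocycle_iff (ρ : Γ →* Matˣ)
    (c : Γ → Mat) :
    (∀ γ δ, (oneAddEpsKerEquiv (.ofAdd (c (γ * δ))) : MatDˣ) =
      oneAddEpsKerEquiv (.ofAdd (c γ)) *
        (inlUnitsHom (ρ γ) * oneAddEpsKerEquiv (.ofAdd (c δ)) * (inlUnitsHom (ρ γ))⁻¹)) ↔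
    ∀ γ δ, c (γ * δ) = c γ + ρ γ * c δ * ((ρ γ)⁻¹ : Matˣ) := by
  simp only [inlUnitsHom_conj_oneAddEpsKerEquiv, ← Subgroup.coe_mul, ← map_mul, ← ofAdd_add,
    Subtype.coe_inj, EmbeddingLike.apply_eq_iff_eq]

def cocyclesEquivCrossedHoms (ρ : Γ →* Matˣ) :
    {c : Γ → Mat // ∀ γ δ, c (γ * δ) = c γ + ρ γ * c δ * ((ρ γ)⁻¹ : Matˣ)} ≃
      {c : Γ → (fstUnitsHom : MatDˣ →* Matˣ).ker // ∀ γ δ, (c (γ * δ) : MatDˣ) =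
        c γ * (inlUnitsHom (ρ γ) * c δ * (inlUnitsHom (ρ γ))⁻¹)} :=
  Equiv.subtypeEquiv
    (Equiv.arrowCongr (.refl Γ) (Multiplicative.ofAdd.trans oneAddEpsKerEquiv.toEquiv))
    fun c => (oneAddEpsKerEquiv_cocycle_iff ρ c).symm

end DualNumberMatrix

/-- Let `ρ : Γ → GL_n(A)` be a representation and `A[ε]` the dual numbers.  The set of
homomorphisms `ρ' : Γ → GL_n(A[ε])` lifting `ρ` (i.e. reducing to `ρ` modulo `ε`) is in
natural bijection with the set of `1`-cocycles `c : Γ → M_n(A)`, i.e. functions satisfying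
`c(γδ) = c(γ) + ρ(γ)·c(δ)·ρ(γ)⁻¹`; the bijection sends `c` to `γ ↦ (1 + ε·c(γ))·ρ(γ)`. -/
theorem stmt8 {A : Type*} [CommRing A] {Γ : Type*} [Group Γ] (n : ℕ)
    (ρ : Γ →* (Matrix (Fin n) (Fin n) A)ˣ) :
    let Mat := Matrix (Fin n) (Fin n) A
    let MatD := Matrix (Fin n) (Fin n) (DualNumber A)
    let Coc := {c : Γ → Mat //
      ∀ γ δ : Γ, c (γ * δ) = c γ + (ρ γ : Mat) * c δ * ((((ρ γ)⁻¹ : Matˣ)) : Mat)}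
    let Lift := {ρ' : Γ →* MatDˣ //
      ∀ (γ : Γ) (i j : Fin n),
        TrivSqZeroExt.fst ((ρ' γ : MatD) i j) = (ρ γ : Mat) i j}
    ∃ e : Coc ≃ Lift, ∀ (c : Coc) (γ : Γ),
      ((e c).1 γ : MatD) =
        (1 + (c.1 γ).map (TrivSqZeroExt.inr : A → DualNumber A)) *
          ((ρ γ : Mat).map (TrivSqZeroExt.inl : A → DualNumber A)) := by
  intro Mat MatD Coc Lift
  refine ⟨(cocyclesEquivCrossedHoms ρ).trans <|
    (crossedHomsEquivLifts fstUnitsHom inlUnitsHom fstUnitsHom_comp_inlUnitsHom ρ).trans <|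
      Equiv.subtypeEquivRight fun ρ' => fstUnitsHom_comp_eq_iff ρ' ρ, fun c γ => ?_⟩
  rw [← eps_smul_inlMatrixHom]
  rfl
end

section
/- Let F be a free group on a set S, let k be a commutative ring, and let M be any representation of F over k (i.e. a k-module with a k-linear F-action). Then the group cohomology H^n(F, M) vanishes for all n ≥ 2. -/
/-!
Embed `M` into the representation coinduced from the trivial subgroup, whose cohomology vanishes
in positive degrees by Shapiro's lemma, and let `Q` be the cokernel. The connecting maps
`Hⁿ⁺¹(F, Q) → Hⁿ⁺²(F, M)` are then surjective, which reduces everything to `H²(F, M) = 0` for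
all `M`. That holds because `H¹(F, -)` preserves epimorphisms: a 1-cocycle is a splitting of
`M ⋊ F → F`, so on a free group it is determined by arbitrary values on the generators, and a
cocycle with values in `Q` lifts generator by generator.
-/

open CategoryTheory Limits groupCohomology

universe u

namespace Rep

variable {k G : Type u} [CommRing k] [Group G]

noncomputable def toMulAutMultiplicative (A : Rep.{u} k G) : G →* MulAut (Multiplicative A) where
  toFun g := AddEquiv.toMultiplicative
    (LinearMap.GeneralLinearGroup.toLinearEquiv (A.ρ.asGroupHom g)).toAddEquiv
  map_one' := by ext; simp
  map_mul' g h := by ext; simp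

@[simp] lemma toMulAutMultiplicative_apply (A : Rep.{u} k G) (g : G) (a : Multiplicative A) :
    A.toMulAutMultiplicative g a = .ofAdd (A.ρ g a.toAdd) := rfl

/-- `0 ⟶ M ⟶ Coind_⊥^G(M) ⟶ Q ⟶ 0`, with `M` embedded by the unit of `Res ⊣ Coind`. -/
noncomputable def coindBotShortComplex (M : Rep.{u} k G) : ShortComplex (Rep.{u} k G) :=
  .mk _ _ (cokernel.condition ((resCoindAdjunction k (⊥ : Subgroup G).subtype).unit.app M))

lemma coindBotShortComplex_shortExact (M : Rep.{u} k G) :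
    (coindBotShortComplex M).ShortExact where
  exact := ShortComplex.exact_cokernel _
  mono_f := (mono_iff_injective _).2 fun x y h => by
    have h1 : M.ρ 1 x = M.ρ 1 y := congrArg (fun f => f.1 1) h
    rwa [map_one] at h1
  epi_g := by dsimp [coindBotShortComplex]; infer_instance

lemma isZero_groupCohomology_coindBotShortComplex_X₂ (M : Rep.{u} k G) (n : ℕ) :
    IsZero (groupCohomology (coindBotShortComplex M).X₂ (n + 1)) :=
  (isZero_groupCohomology_succ_of_subsingleton _ n).of_iso (groupCohomology.coindIso _ _)

end Rep

namespace groupCohomology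

variable {k G : Type u} [CommRing k] [Group G] {A : Rep.{u} k G}

def splittingOfCocycles₁ (f : cocycles₁ A) :
    G →* Multiplicative A ⋊[A.toMulAutMultiplicative] G where
  toFun g := ⟨.ofAdd (f g), g⟩
  map_one' := by ext <;> simp
  map_mul' g h := by
    ext
    · simp [(mem_cocycles₁_iff f).1 f.2 g h, add_comm]
    · rfl

@[simp] lemma splittingOfCocycles₁_apply (f : cocycles₁ A) (g : G) :
    splittingOfCocycles₁ f g = ⟨.ofAdd (f g), g⟩ := rfl

lemma mem_cocycles₁_of_splitting (σ : G →* Multiplicative A ⋊[A.toMulAutMultiplicative] G)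
    (hσ : ∀ g, (σ g).right = g) : (fun g => (σ g).left.toAdd) ∈ cocycles₁ A := by
  refine (mem_cocycles₁_iff _).2 fun g h => ?_
  simp [σ.map_mul, SemidirectProduct.mul_left, hσ, add_comm]

lemma isZero_groupCohomology_X₁_of_epi_map {X : ShortComplex (Rep.{u} k G)} (hX : X.ShortExact)
    (n : ℕ) (h₂ : IsZero (groupCohomology X.X₂ (n + 1)))
    [Epi (groupCohomology.map (A := X.X₂) (MonoidHom.id G) X.g n)] :
    IsZero (groupCohomology X.X₁ (n + 1)) := by
  have hepi := epi_δ_of_isZero hX n h₂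
  have hδ : δ hX n (n + 1) rfl = 0 := by
    rw [← cancel_epi (groupCohomology.map (A := X.X₂) (MonoidHom.id G) X.g n), comp_zero]
    exact (mapShortComplex₃ hX rfl).zero
  rw [hδ] at hepi
  exact IsZero.of_epi_zero (groupCohomology X.X₃ n) _

lemma isZero_groupCohomology_X₁_of_isZero_X₃ {X : ShortComplex (Rep.{u} k G)}
    (hX : X.ShortExact) (n : ℕ) (h₂ : IsZero (groupCohomology X.X₂ (n + 1)))
    (h₃ : IsZero (groupCohomology X.X₃ n)) : IsZero (groupCohomology X.X₁ (n + 1)) :=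
  have := epi_δ_of_isZero hX n h₂
  h₃.of_epi (δ hX n (n + 1) rfl)

end groupCohomology

namespace FreeGroup

variable {k S : Type u} [CommRing k] {A B : Rep.{u} k (FreeGroup S)}

lemma exists_cocycles₁_apply_of (v : S → A) : ∃ f : cocycles₁ A, ∀ s, f (of s) = v s := by
  let σ : FreeGroup S →* Multiplicative A ⋊[A.toMulAutMultiplicative] FreeGroup S :=
    lift fun s => ⟨.ofAdd (v s), of s⟩
  have hσ : SemidirectProduct.rightHom.comp σ = .id _ := ext_hom _ _ fun s => by simp [σ]
  exact ⟨⟨_, mem_cocycles₁_of_splitting σ (DFunLike.congr_fun hσ)⟩, fun s => by simp [σ]⟩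

lemma cocycles₁_ext_of {f g : cocycles₁ A} (h : ∀ s, f (of s) = g (of s)) : f = g :=
  cocycles₁_ext fun x => by
    simpa using congrArg (·.left.toAdd) <| DFunLike.congr_fun
      (ext_hom (splittingOfCocycles₁ f) (splittingOfCocycles₁ g) fun s => by simp [h]) x

lemma mapCocycles₁_surjective (φ : A ⟶ B) [Epi φ] :
    Function.Surjective (mapCocycles₁ (MonoidHom.id _) φ) := by
  intro y
  choose lift hlift using (Rep.epi_iff_surjective φ).1 ‹_›
  obtain ⟨x, hx⟩ := exists_cocycles₁_apply_of fun s => lift (y (of s))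
  exact ⟨x, cocycles₁_ext_of fun s => (congrArg φ.hom (hx s)).trans (hlift _)⟩

instance epi_map_one (φ : A ⟶ B) [Epi φ] : Epi (groupCohomology.map (MonoidHom.id _) φ 1) := by
  have : Epi (mapCocycles₁ (MonoidHom.id _) φ) :=
    (ModuleCat.epi_iff_surjective _).2 (mapCocycles₁_surjective φ)
  exact epi_of_epi_fac (H1π_comp_map (MonoidHom.id _) φ)

theorem isZero_groupCohomology_add_two (M : Rep.{u} k (FreeGroup S)) (n : ℕ) :
    IsZero (groupCohomology M (n + 2)) := by
  induction n generalizing M with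
  | zero =>
    have hX := Rep.coindBotShortComplex_shortExact M
    have := hX.epi_g
    exact isZero_groupCohomology_X₁_of_epi_map hX 1
      (Rep.isZero_groupCohomology_coindBotShortComplex_X₂ M 1)
  | succ n ih =>
    have hX := Rep.coindBotShortComplex_shortExact M
    exact isZero_groupCohomology_X₁_of_isZero_X₃ hX (n + 2)
      (Rep.isZero_groupCohomology_coindBotShortComplex_X₂ M _) (ih _)

end FreeGroup

/-- Let `F` be a free group on a set `S`, `k` a commutative ring, and `M` any representation
of `F` over `k`.  Then the group cohomology `H^n(F, M)` vanishes for all `n ≥ 2`. -/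
theorem stmt11 {k S : Type u} [CommRing k] (M : Rep k (FreeGroup S)) (n : ℕ) (hn : 2 ≤ n) :
    CategoryTheory.Limits.IsZero (groupCohomology M n) := by
  obtain ⟨m, rfl⟩ := Nat.exists_eq_add_of_le' hn
  exact FreeGroup.isZero_groupCohomology_add_two M m
end

section
/- Let S be a profinite topological space (compact, Hausdorff, totally disconnected) and let 0 → V' → V → V'' → 0 be a short exact sequence of abelian groups. Then the induced sequence 0 → C_lc(S, V') → C_lc(S, V) → C_lc(S, V'') → 0 of abelian groups of locally constant functions is exact; in particular every locally constant function S → V'' lifts to a locally constant function S → V. -/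
namespace LocallyConstant

variable {X Y Z : Type*} [TopologicalSpace X] {f : Y → Z}

theorem map_injective (hf : Function.Injective f) :
    Function.Injective (map f : LocallyConstant X Y → LocallyConstant X Z) :=
  fun _ _ h => ext fun x => hf (DFunLike.congr_fun h x)

theorem map_surjective (hf : Function.Surjective f) :
    Function.Surjective (map f : LocallyConstant X Y → LocallyConstant X Z) :=
  fun h => ⟨h.map (Function.surjInv hf), ext fun x => Function.surjInv_eq hf (h x)⟩

theorem exists_map_eq_iff [Nonempty Y] (h : LocallyConstant X Z) :
    (∃ h' : LocallyConstant X Y, h'.map f = h) ↔ ∀ x, h x ∈ Set.range f := by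
  constructor
  · rintro ⟨h', rfl⟩ x
    exact ⟨h' x, rfl⟩
  · intro hh
    exact ⟨h.map (Function.invFun f), ext fun x => Function.invFun_eq (hh x)⟩

end LocallyConstant

theorem stmt12_general {S : Type*} [TopologicalSpace S]
    {V' V V'' : Type*} [AddCommGroup V'] [AddCommGroup V] [AddCommGroup V'']
    (f : V' →+ V) (g : V →+ V'')
    (hf : Function.Injective f) (hg : Function.Surjective g)
    (hfg : ∀ v : V, g v = 0 ↔ ∃ w : V', f w = v) :
    Function.Injective
        (LocallyConstant.map (f : V' → V) : LocallyConstant S V' → LocallyConstant S V) ∧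
      (∀ h : LocallyConstant S V,
        LocallyConstant.map (g : V → V'') h = 0 ↔
          ∃ h' : LocallyConstant S V', LocallyConstant.map (f : V' → V) h' = h) ∧
      Function.Surjective
        (LocallyConstant.map (g : V → V'') : LocallyConstant S V → LocallyConstant S V'') := by
  refine ⟨LocallyConstant.map_injective hf, fun h => ?_, LocallyConstant.map_surjective hg⟩
  rw [LocallyConstant.exists_map_eq_iff, LocallyConstant.ext_iff]
  exact forall_congr' fun x => hfg (h x)

/-- Let `S` be a profinite space (compact, Hausdorff, totally disconnected) and
`0 → V' → V → V'' → 0` a short exact sequence of abelian groups.  Then the induced sequence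
`0 → C_lc(S, V') → C_lc(S, V) → C_lc(S, V'') → 0` of groups of locally constant functions is
exact; in particular every locally constant function `S → V''` lifts to a locally constant
function `S → V`. -/
theorem stmt12 {S : Type*} [TopologicalSpace S] [CompactSpace S] [T2Space S]
    [TotallyDisconnectedSpace S]
    {V' V V'' : Type*} [AddCommGroup V'] [AddCommGroup V] [AddCommGroup V'']
    (f : V' →+ V) (g : V →+ V'')
    (hf : Function.Injective f) (hg : Function.Surjective g)
    (hfg : ∀ v : V, g v = 0 ↔ ∃ w : V', f w = v) :
    Function.Injective
        (LocallyConstant.map (f : V' → V) : LocallyConstant S V' → LocallyConstant S V) ∧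
      (∀ h : LocallyConstant S V,
        LocallyConstant.map (g : V → V'') h = 0 ↔
          ∃ h' : LocallyConstant S V', LocallyConstant.map (f : V' → V) h' = h) ∧
      Function.Surjective
        (LocallyConstant.map (g : V → V'') : LocallyConstant S V → LocallyConstant S V'') :=
  stmt12_general f g hf hg hfg
end

section
/- Let K be an algebraically closed field, m ≥ 1, and q ≥ 2 an integer. If g ∈ GL_m(K) satisfies charpoly(g^q) = charpoly(g), then setting N = q^{m!} − 1, the element g^N is unipotent: charpoly(g^N) = (t − 1)^m, equivalently (g^N − 1)^m = 0. -/
/-!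
Equality of the characteristic polynomials makes `x ↦ x ^ q` map the finite spectrum of `g`
onto itself, hence permute it; a permutation of at most `m` points has order dividing `m!`, so
every eigenvalue satisfies `x ^ q ^ m! = x`, and since `g` is invertible, `x ^ N = 1`. Thus `1` is
the only eigenvalue of `g ^ N`, and Cayley–Hamilton gives `(g ^ N - 1) ^ m = 0`.
-/

open Polynomial

theorem Set.Finite.iterate_factorial_apply_eq_self {α : Type*} {f : α → α} {s : Set α}
    (hs : s.Finite) (hf : f '' s = s) {n : ℕ} (hn : s.ncard ≤ n) {x : α} (hx : x ∈ s) :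
    f^[n.factorial] x = x := by
  obtain ⟨hsurj, hmaps⟩ := Set.image_eq_iff_surjOn_mapsTo.mp hf
  have hbij := (hs.surjOn_iff_bijOn_of_mapsTo hmaps).mp hsurj
  have : Finite s := hs
  have hperm : hbij.equiv ^ n.factorial = 1 := by
    refine orderOf_dvd_iff_pow_eq_one.mp ((orderOf_dvd_natCard _).trans ?_)
    rw [Nat.card_perm, Nat.card_coe_set_eq]
    exact Nat.factorial_dvd_factorial hn
  have := congrArg Subtype.val (Equiv.congr_fun hperm ⟨x, hx⟩)
  rw [Equiv.Perm.coe_pow] at this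
  rw [← hmaps.coe_iterate_restrict ⟨x, hx⟩]
  exact this

theorem Polynomial.eq_X_sub_C_pow_of_forall_mem_roots {K : Type*} [Field K] {p : K[X]}
    (hsplit : p.Splits) (hmonic : p.Monic) {a : K} (h : ∀ x ∈ p.roots, x = a) :
    p = (X - C a) ^ p.natDegree := by
  have hroots : p.roots = Multiset.replicate p.natDegree a :=
    Multiset.eq_replicate.mpr ⟨splits_iff_card_roots.mp hsplit, h⟩
  conv_lhs => rw [hsplit.eq_prod_roots_of_monic hmonic]
  rw [hroots, Multiset.map_replicate, Multiset.prod_replicate]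

namespace Matrix

variable {n K : Type*} [Fintype n] [DecidableEq n] [Field K]

theorem ncard_spectrum_le (A : Matrix n n K) : (spectrum K A).ncard ≤ Fintype.card n := by
  classical
  have hspec : spectrum K A = ↑A.charpoly.roots.toFinset := by
    ext x
    simp [mem_spectrum_iff_isRoot_charpoly, A.charpoly_monic.ne_zero]
  rw [hspec, Set.ncard_coe_finset]
  calc A.charpoly.roots.toFinset.card ≤ Multiset.card A.charpoly.roots :=
        Multiset.toFinset_card_le _
    _ ≤ A.charpoly.natDegree := card_roots' _
    _ = Fintype.card n := charpoly_natDegree_eq_dim A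

theorem charpoly_eq_X_sub_C_pow_of_spectrum_subset [IsAlgClosed K] (A : Matrix n n K) {a : K}
    (h : spectrum K A ⊆ {a}) : A.charpoly = (X - C a) ^ Fintype.card n := by
  rw [← charpoly_natDegree_eq_dim A]
  refine eq_X_sub_C_pow_of_forall_mem_roots (IsAlgClosed.splits _) A.charpoly_monic
    fun x hx ↦ h ?_
  rw [mem_spectrum_iff_isRoot_charpoly]
  exact isRoot_of_mem_roots hx

theorem image_pow_spectrum_eq_of_charpoly_pow_eq [IsAlgClosed K] (A : Matrix n n K) {q : ℕ}
    (hq : 0 < q) (h : (A ^ q).charpoly = A.charpoly) :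
    (· ^ q) '' spectrum K A = spectrum K A := by
  ext x
  rw [← spectrum.map_pow_of_pos A hq, mem_spectrum_iff_isRoot_charpoly,
    mem_spectrum_iff_isRoot_charpoly, h]

theorem pow_pow_factorial_sub_one_eq_one_of_mem_spectrum [IsAlgClosed K] {A : Matrix n n K}
    (hA : IsUnit A) {q : ℕ} (hq : 0 < q) (h : (A ^ q).charpoly = A.charpoly) {x : K}
    (hx : x ∈ spectrum K A) :
    x ^ (q ^ (Fintype.card n).factorial - 1) = 1 := by
  have hfix : x ^ q ^ (Fintype.card n).factorial = x := by
    simpa only [pow_iterate] using (finite_spectrum A).iterate_factorial_apply_eq_self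
      (image_pow_spectrum_eq_of_charpoly_pow_eq A hq h) (ncard_spectrum_le A) hx
  have hx0 : x ≠ 0 := fun h0 ↦ spectrum.zero_mem_iff K |>.mp (h0 ▸ hx) hA
  rw [← mul_eq_left₀ hx0, ← pow_succ', Nat.sub_add_cancel (Nat.one_le_pow _ _ hq), hfix]

end Matrix

theorem stmt15_general {K : Type*} [Field K] [IsAlgClosed K] (m : ℕ) (q : ℕ)
    (g : (Matrix (Fin m) (Fin m) K)ˣ)
    (h : ((g : Matrix (Fin m) (Fin m) K) ^ q).charpoly =
      (g : Matrix (Fin m) (Fin m) K).charpoly) :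
    ((g : Matrix (Fin m) (Fin m) K) ^ (q ^ Nat.factorial m - 1)).charpoly =
        (Polynomial.X - 1) ^ m ∧
      ((g : Matrix (Fin m) (Fin m) K) ^ (q ^ Nat.factorial m - 1) - 1) ^ m = 0 := by
  set A := (g : Matrix (Fin m) (Fin m) K)
  set N := q ^ m.factorial - 1
  have hchar : (A ^ N).charpoly = (X - 1) ^ m := by
    rcases Nat.eq_zero_or_pos N with hN | hN
    · simp [hN, Matrix.charpoly_one]
    have hq : 0 < q := Nat.pos_of_ne_zero fun hq ↦ by simp [N, hq, m.factorial_ne_zero] at hN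
    have hspec : spectrum K (A ^ N) ⊆ {1} := by
      rw [spectrum.map_pow_of_pos A hN]
      rintro _ ⟨x, hx, rfl⟩
      simpa using Matrix.pow_pow_factorial_sub_one_eq_one_of_mem_spectrum g.isUnit hq h hx
    simpa using (A ^ N).charpoly_eq_X_sub_C_pow_of_spectrum_subset hspec
  refine ⟨hchar, ?_⟩
  simpa [hchar] using (A ^ N).aeval_self_charpoly

/-- Let `K` be an algebraically closed field, `m ≥ 1`, `q ≥ 2`.  If `g ∈ GL_m(K)` satisfies
`charpoly(g^q) = charpoly(g)` then, with `N = q^{m!} − 1`, the element `g^N` is unipotent: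
its characteristic polynomial is `(t − 1)^m`, equivalently `(g^N − 1)^m = 0`. -/
theorem stmt15 {K : Type*} [Field K] [IsAlgClosed K] (m : ℕ) (hm : 1 ≤ m) (q : ℕ)
    (hq : 2 ≤ q) (g : (Matrix (Fin m) (Fin m) K)ˣ)
    (h : ((g : Matrix (Fin m) (Fin m) K) ^ q).charpoly =
      (g : Matrix (Fin m) (Fin m) K).charpoly) :
    ((g : Matrix (Fin m) (Fin m) K) ^ (q ^ Nat.factorial m - 1)).charpoly =
        (Polynomial.X - 1) ^ m ∧
      ((g : Matrix (Fin m) (Fin m) K) ^ (q ^ Nat.factorial m - 1) - 1) ^ m = 0 :=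
  stmt15_general m q g h
end
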